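/- Let G = (V,E) be a finite simple graph, let uv ∈ E, let W ⊆ N(u) \ {v} be a set inducing a clique in G, and let G̃ be the graph obtained from G by removing all edges connecting u to vertices in N(u) \ (W ∪ {v}). Then for every H ⊆ V with {u,v} ⊆ H, one has α(G̃|{u,v}[H]) = α(G̃[H]) ≥ α(G[H]); consequently, the rank inequality x_H ≤ α(G̃|{u,v}[H]) is valid for STAB(G). -/

import Mathlib

open Finset

variable {V : Type*}

/-- A stable (independent) set of a graph: pairwise non-adjacent vertices. -/
def IsStable (G : SimpleGraph V) (S : Finset V) : Prop :=
  ∀ u ∈ S, ∀ v ∈ S, ¬ G.Adj u v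

/-- The characteristic vectors of stable sets of `G`. -/
def stableVecs [DecidableEq V] (G : SimpleGraph V) : Set (V → ℝ) :=
  {x | ∃ S : Finset V, IsStable G S ∧ x = fun v => if v ∈ S then (1 : ℝ) else 0}

/-- The stable set polytope `STAB(G)`. -/
def STAB [DecidableEq V] (G : SimpleGraph V) : Set (V → ℝ) :=
  convexHull ℝ (stableVecs G)

/-- `x_W = ∑_{v ∈ W} x_v`. -/
def vsum (W : Finset V) (x : V → ℝ) : ℝ := ∑ v ∈ W, x v

/-- The clique projection `G|W`: add every non-edge `uv` with `W ⊆ N(u) ∪ N(v)`. -/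
def cliqueProj (G : SimpleGraph V) (W : Finset V) : SimpleGraph V where
  Adj u v := G.Adj u v ∨ (u ≠ v ∧ ¬G.Adj u v ∧ ∀ w ∈ W, G.Adj w u ∨ G.Adj w v)
  symm := by
    constructor
    rintro u v (h | ⟨hne, hna, h⟩)
    · exact Or.inl h.symm
    · exact Or.inr ⟨hne.symm, fun h' => hna h'.symm, fun w hw => (h w hw).symm⟩
  loopless := by
    constructor
    rintro u (h | ⟨hne, _, _⟩)
    · exact G.irrefl h
    · exact hne rfl

/-- Iterated projected graphs: `G_0 = G`, `G_t = G_{t-1} | W_t`. -/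
def projSeq (G : SimpleGraph V) (W : ℕ → Finset V) : ℕ → SimpleGraph V
  | 0 => G
  | t + 1 => cliqueProj (projSeq G W t) (W (t + 1))

/-- `F_t = {x ∈ STAB(G) : x_{W_j} = 1, j = 1, …, t}`. -/
def Fface [DecidableEq V] (G : SimpleGraph V) (W : ℕ → Finset V) (t : ℕ) : Set (V → ℝ) :=
  {x ∈ STAB G | ∀ j ∈ Finset.Icc 1 t, vsum (W j) x = 1}

/-- `α(G[H], c)`: the maximum `c`-weight of a stable set of `G` contained in `H`. -/
noncomputable def alphaW (G : SimpleGraph V) (H : Finset V) (c : V → ℝ) : ℝ :=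
  sSup {r : ℝ | ∃ S : Finset V, S ⊆ H ∧ IsStable G S ∧ r = ∑ v ∈ S, c v}

/-- `α(G[H])`: the maximum cardinality of a stable set of `G` contained in `H`. -/
noncomputable def alphaOn (G : SimpleGraph V) (H : Finset V) : ℕ :=
  sSup {k : ℕ | ∃ S : Finset V, S ⊆ H ∧ IsStable G S ∧ S.card = k}

/-- The stability number `α(G)`. -/
noncomputable def alphaNum [Fintype V] (G : SimpleGraph V) : ℕ :=
  sSup {k : ℕ | ∃ S : Finset V, IsStable G S ∧ S.card = k}

/-- `cᵀx`. -/
def dotp [Fintype V] (c x : V → ℝ) : ℝ := ∑ v, c v * x v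

/-- The affine dimension of a set of points. -/
noncomputable def affDim (s : Set (V → ℝ)) : ℕ := Module.finrank ℝ (vectorSpan ℝ s)

/-- Strong hypertree (with hyperedges of size `k`). -/
inductive IsStrongHypertree [DecidableEq V] (k : ℕ) : Finset V → Finset (Finset V) → Prop
  | base (V' : Finset V) : IsStrongHypertree k V' {V'}
  | step (V' : Finset V) (E : Finset (Finset V)) (v : V) (Wi : Finset V) :
      v ∈ V' → v ∈ Wi → Wi ∈ E →
      (∃ Wj ∈ E, Wj ≠ Wi ∧ (Wi ∩ Wj).card = k - 1) →
      IsStrongHypertree k (V'.erase v) (E.erase Wi) →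
      IsStrongHypertree k V' E

/-- Condition (I): `|W_t| = k` and the subgraph of `G_{t-1}` induced by `W_1 ∪ ⋯ ∪ W_t`
is `k`-partite with stable vertex classes `V_t^1, …, V_t^k`. -/
def CondI [DecidableEq V] (G : SimpleGraph V) (W : ℕ → Finset V)
    (Vc : ℕ → ℕ → Finset V) (k t : ℕ) : Prop :=
  (W t).card = k ∧
  (Finset.Icc 1 k).biUnion (Vc t) = (Finset.Icc 1 t).biUnion W ∧
  (∀ i ∈ Finset.Icc 1 k, ∀ j ∈ Finset.Icc 1 k, i ≠ j → Disjoint (Vc t i) (Vc t j)) ∧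
  (∀ i ∈ Finset.Icc 1 k, ∀ u ∈ Vc t i, ∀ v ∈ Vc t i, ¬(projSeq G W (t - 1)).Adj u v)

/-- Condition (II): `T_t = (V_t, {W_1, …, W_t})` is a strong hypertree. -/
def CondII [DecidableEq V] (W : ℕ → Finset V) (Vc : ℕ → ℕ → Finset V) (k t : ℕ) : Prop :=
  IsStrongHypertree k ((Finset.Icc 1 k).biUnion (Vc t)) ((Finset.Icc 1 t).image W)

/-- Condition (III): every `w ∉ V_t` misses some class `V_t^i` in `G_{t-1}`. -/
def CondIII [DecidableEq V] (G : SimpleGraph V) (W : ℕ → Finset V)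
    (Vc : ℕ → ℕ → Finset V) (k t : ℕ) : Prop :=
  ∀ w : V, w ∉ (Finset.Icc 1 k).biUnion (Vc t) →
    ∃ i ∈ Finset.Icc 1 k, ∀ u ∈ Vc t i, ¬(projSeq G W (t - 1)).Adj w u

/-- Condition (IV). -/
def CondIV [Fintype V] [DecidableEq V] (G : SimpleGraph V) (W : ℕ → Finset V)
    (Vc : ℕ → ℕ → Finset V) (k r : ℕ) : Prop :=
  ∀ i ∈ Finset.Icc 1 (k - 1), ∀ t ∈ Finset.Icc 1 r, ∀ v ∈ W t ∩ Vc t i,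
    ∀ w ∈ Finset.univ \ (Finset.Icc 1 k).biUnion (Vc r),
      (∃ z ∈ Vc r i, (projSeq G W r).Adj z w) →
      (G.Adj v w ∨ ∃ t' ∈ Finset.Icc 1 r,
        (projSeq G W (t' - 1)).IsClique (W t : Set V) ∧
        W t ≠ W t' ∧ (W t ∩ W t').card = k - 1 ∧
        v ∉ W t' ∧ ∃ v' ∈ W t' ∩ Vc r i, (projSeq G W (t' - 1)).Adj v' w)

/-- Condition (V): no vertex of `V_t^k` has a neighbor in `V_r^0` in the graph `G_r`. -/
def CondV [Fintype V] [DecidableEq V] (G : SimpleGraph V) (W : ℕ → Finset V)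
    (Vc : ℕ → ℕ → Finset V) (k r t : ℕ) : Prop :=
  ∀ v ∈ Vc t k, ∀ w ∈ Finset.univ \ (Finset.Icc 1 k).biUnion (Vc r),
    ¬(projSeq G W r).Adj v w

/-- `STAB(G[H])`, embedded in `ℝ^V` (coordinates outside `H` are zero). -/
def STABon [DecidableEq V] (G : SimpleGraph V) (H : Finset V) : Set (V → ℝ) :=
  convexHull ℝ
    {x | ∃ S : Finset V, S ⊆ H ∧ IsStable G S ∧ x = fun v => if v ∈ S then (1 : ℝ) else 0}

/-!
Every neighbour of `u` in `G̃` other than `v` lies in the clique `W`, so `N_G̃(u) \ {v}` is a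
clique of `G̃`. A stable set `S` of `G̃[H]` that is not stable in `G̃|{u,v}` contains neighbours of
both `u` and `v`; hence `v ∉ S` and `S` contains exactly one neighbour `a` of `u`. Exchanging `a`
for `u` gives a stable set of the same size in which `u` has no neighbour, and such a set stays
stable in the clique projection. Deleting edges can only increase `α`, and the rank inequality
holds at every vertex of `STAB(G)` because `α(G[H]) ≤ α(G̃[H])`.
-/

section

variable {G G' : SimpleGraph V} {H S T W : Finset V}

lemma IsStable.subset (hST : S ⊆ T) (hT : IsStable G T) : IsStable G S :=
  fun a ha b hb => hT a (hST ha) b (hST hb)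

lemma IsStable.anti (hG : G' ≤ G) (hS : IsStable G S) : IsStable G' S :=
  fun a ha b hb hab => hS a ha b hb (hG hab)

lemma IsStable.insert [DecidableEq V] {u : V} (hT : IsStable G T) (hu : ∀ y ∈ T, ¬G.Adj u y) :
    IsStable G (insert u T) := by
  intro a ha b hb hab
  rw [mem_insert] at ha hb
  rcases ha with rfl | ha <;> rcases hb with rfl | hb
  · exact G.loopless.irrefl _ hab
  · exact hu _ hb hab
  · exact hu _ ha hab.symm
  · exact hT a ha b hb hab

lemma le_cliqueProj : G ≤ cliqueProj G W := fun _ _ h => Or.inl h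

lemma exists_adj_of_not_isStable_cliqueProj (hS : IsStable G S)
    (hS' : ¬IsStable (cliqueProj G W) S) : ∀ w ∈ W, ∃ y ∈ S, G.Adj w y := by
  simp only [IsStable, not_forall, not_not] at hS'
  obtain ⟨p, hp, q, hq, (hpq | ⟨-, -, hcover⟩)⟩ := hS'
  · exact absurd hpq (hS p hp q hq)
  · intro w hw
    rcases hcover w hw with h | h
    exacts [⟨p, hp, h⟩, ⟨q, hq, h⟩]

lemma alphaOn_bddAbove (G : SimpleGraph V) (H : Finset V) :
    BddAbove {k : ℕ | ∃ S : Finset V, S ⊆ H ∧ IsStable G S ∧ S.card = k} := by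
  refine ⟨H.card, ?_⟩
  rintro k ⟨S, hS, -, rfl⟩
  exact card_le_card hS

lemma le_alphaOn (hS : S ⊆ H) (hst : IsStable G S) : S.card ≤ alphaOn G H :=
  le_csSup (alphaOn_bddAbove G H) ⟨S, hS, hst, rfl⟩

lemma alphaOn_le {n : ℕ} (h : ∀ S : Finset V, S ⊆ H → IsStable G S → S.card ≤ n) :
    alphaOn G H ≤ n := by
  refine csSup_le ⟨0, ∅, empty_subset H, fun a ha => absurd ha (notMem_empty a), rfl⟩ ?_
  rintro k ⟨S, hS, hst, rfl⟩
  exact h S hS hst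

lemma alphaOn_anti (hG : G' ≤ G) (H : Finset V) : alphaOn G H ≤ alphaOn G' H :=
  alphaOn_le fun _ hS hst => le_alphaOn hS (hst.anti hG)

theorem alphaOn_cliqueProj_pair_eq [DecidableEq V] {u v : V} (hu : u ∈ H)
    (hN : G.IsClique (G.neighborSet u \ {v})) :
    alphaOn (cliqueProj G {u, v}) H = alphaOn G H := by
  refine le_antisymm (alphaOn_anti le_cliqueProj H) (alphaOn_le fun S hSH hS => ?_)
  by_cases hSproj : IsStable (cliqueProj G {u, v}) S
  · exact le_alphaOn hSH hSproj
  have hcover := exists_adj_of_not_isStable_cliqueProj hS hSproj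
  obtain ⟨a, haS, hua⟩ := hcover u (by simp)
  obtain ⟨b, hbS, hvb⟩ := hcover v (by simp)
  have huS : u ∉ S := fun h => hS u h a haS hua
  have hvS : v ∉ S := fun h => hS v h b hbS hvb
  have hu_erase : ∀ y ∈ S.erase a, ¬G.Adj u y := fun y hy huy =>
    hS a haS y (mem_of_mem_erase hy) <|
      hN ⟨hua, ne_of_mem_of_not_mem haS hvS⟩ ⟨huy, ne_of_mem_of_not_mem (mem_of_mem_erase hy) hvS⟩
        (ne_of_mem_erase hy).symm
  have hu_insert : ∀ y ∈ insert u (S.erase a), ¬G.Adj u y := by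
    intro y hy
    rcases mem_insert.1 hy with rfl | hy
    exacts [G.loopless.irrefl y, hu_erase y hy]
  have hS'stable : IsStable (cliqueProj G {u, v}) (insert u (S.erase a)) := by
    by_contra h
    obtain ⟨y, hy, huy⟩ := exists_adj_of_not_isStable_cliqueProj
      ((hS.subset (erase_subset a S)).insert hu_erase) h u (by simp)
    exact hu_insert y hy huy
  calc S.card = (insert u (S.erase a)).card := by
        rw [card_insert_of_notMem fun h => huS (mem_of_mem_erase h), card_erase_add_one haS]
    _ ≤ _ := le_alphaOn (insert_subset hu ((erase_subset a S).trans hSH)) hS'stable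

lemma vsum_le_alphaOn_of_mem_STAB [DecidableEq V] {x : V → ℝ} (hx : x ∈ STAB G) :
    vsum H x ≤ alphaOn G H := by
  have hlin : IsLinearMap ℝ (vsum H) :=
    ⟨fun x y => sum_add_distrib, fun c x => (mul_sum H x c).symm⟩
  refine convexHull_min ?_ (convex_halfSpace_le hlin _) hx
  rintro _ ⟨S, hS, rfl⟩
  have hcard : vsum H (fun v => if v ∈ S then (1 : ℝ) else 0) = ((H ∩ S).card : ℝ) := by
    simp [vsum, sum_ite_mem]
  simp only [Set.mem_ofPred_eq, hcard]
  exact_mod_cast le_alphaOn inter_subset_left (hS.subset inter_subset_right)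

end

theorem stmt18_general {V : Type*} [DecidableEq V] (G : SimpleGraph V) (u v : V)
    (W : Finset V)
    (hWcl : G.IsClique (W : Set V))
    (Gt : SimpleGraph V)
    (hGt : ∀ a b, Gt.Adj a b ↔
      G.Adj a b ∧ ¬(a = u ∧ b ∉ W ∧ b ≠ v) ∧ ¬(b = u ∧ a ∉ W ∧ a ≠ v)) :
    ∀ H : Finset V, u ∈ H → v ∈ H →
      alphaOn (cliqueProj Gt {u, v}) H = alphaOn Gt H ∧
      alphaOn G H ≤ alphaOn Gt H ∧
      ∀ x ∈ STAB G, vsum H x ≤ (alphaOn (cliqueProj Gt {u, v}) H : ℝ) := by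
  intro H hu _
  have hGtG : Gt ≤ G := fun a b h => ((hGt a b).1 h).1
  have hmemW : ∀ a, Gt.Adj u a → a ≠ v → a ∈ W := fun a hua hav => by
    by_contra haW
    exact ((hGt u a).1 hua).2.1 ⟨rfl, haW, hav⟩
  have hclique : Gt.IsClique (Gt.neighborSet u \ {v}) := by
    rintro a ⟨hua, hav⟩ b ⟨hub, hbv⟩ hab
    exact (hGt a b).2 ⟨hWcl (hmemW a hua hav) (hmemW b hub hbv) hab,
      fun h => Gt.ne_of_adj hua h.1.symm, fun h => Gt.ne_of_adj hub h.1.symm⟩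
  have heq := alphaOn_cliqueProj_pair_eq hu hclique
  have hle := alphaOn_anti hGtG H
  refine ⟨heq, hle, fun x hx => ?_⟩
  calc vsum H x ≤ alphaOn G H := vsum_le_alphaOn_of_mem_STAB hx
    _ ≤ alphaOn (cliqueProj Gt {u, v}) H := by rw [heq]; exact_mod_cast hle

/-- removing the edges from `u` to `N(u) \ (W ∪ {v})` (where `W` is a
clique inside `N(u) \ {v}`) and projecting `{u,v}` preserves the stability number of
every induced subgraph containing `u` and `v`; hence the resulting rank inequality is
valid for `STAB(G)`. -/
theorem stmt18 {V : Type*} [Fintype V] [DecidableEq V] (G : SimpleGraph V) (u v : V)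
    (huv : G.Adj u v) (W : Finset V)
    (hWsub : ∀ w ∈ W, G.Adj u w ∧ w ≠ v)
    (hWcl : G.IsClique (W : Set V))
    (Gt : SimpleGraph V)
    (hGt : ∀ a b, Gt.Adj a b ↔
      G.Adj a b ∧ ¬(a = u ∧ b ∉ W ∧ b ≠ v) ∧ ¬(b = u ∧ a ∉ W ∧ a ≠ v)) :
    ∀ H : Finset V, u ∈ H → v ∈ H →
      alphaOn (cliqueProj Gt {u, v}) H = alphaOn Gt H ∧
      alphaOn G H ≤ alphaOn Gt H ∧
      ∀ x ∈ STAB G, vsum H x ≤ (alphaOn (cliqueProj Gt {u, v}) H : ℝ) :=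
  stmt18_general G u v W hWcl Gt hGt
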